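/- arXiv:2201.13046 — 2 statements merged into one kernel-verified Lean document; each statement's English description precedes it below -/
import Mathlib

section
/- For every simplicial complex X on a finite vertex set V and every subset S ⊆ V, the theta-number of the induced subcomplex X[S] := {A ∈ X : A ⊆ S} satisfies θ(X[S]) ≤ θ(X). -/
namespace ThetaPaper

variable {α : Type*} [DecidableEq α]

def delF (X : Finset (Finset α)) (v : α) : Finset (Finset α) :=
  X.filter fun S => v ∉ S

def lkF (X : Finset (Finset α)) (v : α) : Finset (Finset α) :=
  X.filter fun T => v ∉ T ∧ insert v T ∈ X

def vertF (X : Finset (Finset α)) : Finset α := X.biUnion id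

def nonConeF (X : Finset (Finset α)) : Finset α :=
  (vertF X).filter fun v => delF X v ≠ lkF X v

lemma delF_card_lt {X : Finset (Finset α)} {v : α} (h : v ∈ nonConeF X) :
    (delF X v).card < X.card := by
  obtain ⟨A, hA, hvA⟩ := Finset.mem_biUnion.mp (Finset.mem_filter.mp h).1
  refine Finset.card_lt_card ⟨Finset.filter_subset _ _, fun hsub => ?_⟩
  have h2 := hsub hA
  rw [delF, Finset.mem_filter] at h2
  exact h2.2 hvA

lemma lkF_card_lt {X : Finset (Finset α)} {v : α} (h : v ∈ nonConeF X) :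
    (lkF X v).card < X.card := by
  obtain ⟨A, hA, hvA⟩ := Finset.mem_biUnion.mp (Finset.mem_filter.mp h).1
  refine Finset.card_lt_card ⟨Finset.filter_subset _ _, fun hsub => ?_⟩
  have h2 := hsub hA
  rw [lkF, Finset.mem_filter] at h2
  exact h2.2.1 hvA

def theta (X : Finset (Finset α)) : ℕ :=
  if h : (nonConeF X).Nonempty then
    (nonConeF X).attach.inf' (Finset.attach_nonempty_iff.mpr h) fun v =>
      max (theta (delF X v.1)) (theta (lkF X v.1) + 1)
  else 0
termination_by X.card
decreasing_by
  · exact delF_card_lt v.2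
  · exact lkF_card_lt v.2

def IsComplex (X : Finset (Finset α)) : Prop :=
  ∀ A ∈ X, ∀ B, B ⊆ A → B ∈ X

/-- `dim(X)`, as an integer: the maximum of `|A| - 1` over faces `A ∈ X`. -/
noncomputable def dimZ (X : Finset (Finset α)) : ℤ :=
  sSup {d : ℤ | ∃ A ∈ X, d = (A.card : ℤ) - 1}

/-- A circuit (minimal non-face) of `X`. -/
def IsCircuit (X : Finset (Finset α)) (S : Finset α) : Prop :=
  S ∉ X ∧ ∀ T ⊂ S, T ∈ X

/-- A circuit cover of `X`. -/
def IsCircuitCover (X : Finset (Finset α)) (C : Finset α) : Prop :=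
  ∀ S : Finset α, IsCircuit X S → (S.card : ℤ) - 1 ≤ ((S ∩ C).card : ℤ)

/-- The circuit cover number `ccn(X)` of a complex with vertex set `V`. -/
noncomputable def ccnZ (V : Finset α) (X : Finset (Finset α)) : ℤ :=
  sInf {k : ℤ | ∃ C ⊆ V, IsCircuitCover X C ∧
    k = dimZ (X.filter fun A => A ⊆ C) + 1}

/-- The simplicial join. -/
def joinF (X₁ X₂ : Finset (Finset α)) : Finset (Finset α) :=
  X₁.biUnion fun A => X₂.image fun B => A ∪ B

/-- A facet (maximal face) of `X`. -/
def IsFacet (X : Finset (Finset α)) (B : Finset α) : Prop :=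
  B ∈ X ∧ ∀ C ∈ X, B ⊆ C → C = B

/-- An elementary `k`-collapse: remove the interval `[A, B]` where `A` is a face of size
at most `k` contained in the unique facet `B`. -/
def ElemCollapse (k : ℕ) (X Y : Finset (Finset α)) : Prop :=
  ∃ A B : Finset α, A ∈ X ∧ A.card ≤ k ∧ IsFacet X B ∧ A ⊆ B ∧
    (∀ C, IsFacet X C → A ⊆ C → C = B) ∧
    Y = X.filter fun C => ¬ (A ⊆ C ∧ C ⊆ B)

/-- `X` is `k`-collapsible: it reduces to the void complex by elementary `k`-collapses. -/
def Collapsible (k : ℕ) (X : Finset (Finset α)) : Prop :=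
  Relation.ReflTransGen (ElemCollapse k) X ∅

/-- The collapsibility number `C(X)`. -/
noncomputable def collapseNum (X : Finset (Finset α)) : ℕ :=
  sInf {k : ℕ | Collapsible k X}

/-- `k(X)`: the maximum size of a set `{x₁, …, x_k}` of vertices of `X` admitting facets
`A₁, …, A_{k+1}` with `x_i ∉ A_i` and `x_i ∈ A_j` for `i < j`. -/
noncomputable def kNum (X : Finset (Finset α)) : ℕ :=
  sSup {k : ℕ | ∃ (x : Fin k → α) (A : Fin (k + 1) → Finset α),
    Function.Injective x ∧ (∀ i, {x i} ∈ X) ∧ (∀ j, IsFacet X (A j)) ∧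
    (∀ i : Fin k, x i ∉ A i.castSucc) ∧
    (∀ (i : Fin k) (j : Fin (k + 1)), (i : ℕ) < (j : ℕ) → x i ∈ A j)}

/-- Vertex decomposable simplicial complexes. -/
inductive VertexDecomposable : Finset (Finset α) → Prop
  | simplex (S : Finset α) : VertexDecomposable S.powerset
  | shed (X : Finset (Finset α)) (v : α) (hv : {v} ∈ X)
      (hdel : VertexDecomposable (delF X v)) (hlk : VertexDecomposable (lkF X v))
      (hfacet : ∀ B, IsFacet (delF X v) B → IsFacet X B) : VertexDecomposable X

section Graphs

variable {V : Type*} [Fintype V] [DecidableEq V]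

open Classical in
/-- The independence complex of a graph, as a `Finset` of faces. -/
noncomputable def indComplex (G : SimpleGraph V) : Finset (Finset V) :=
  Finset.univ.powerset.filter fun A => ∀ x ∈ A, ∀ y ∈ A, ¬ G.Adj x y

/-- The theta-number of a graph: the theta-number of its independence complex. -/
noncomputable def thetaG (G : SimpleGraph V) : ℕ := theta (indComplex G)

/-- A graph is chordal if it has no induced cycle of length greater than `3`. -/
def Chordal {W : Type*} (G : SimpleGraph W) : Prop :=
  ∀ n : ℕ, 3 < n → IsEmpty (SimpleGraph.cycleGraph n ↪g G)

/-- Contraction of the edge `xy`: the merged vertex is `x`, and `y` becomes isolated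
(isolated vertices are irrelevant for the independence complex/theta-number). -/
def contractEdge (G : SimpleGraph V) (x y : V) : SimpleGraph V where
  Adj a b := a ≠ b ∧ a ≠ y ∧ b ≠ y ∧
    ((a = x ∧ (G.Adj x b ∨ G.Adj y b)) ∨
     (b = x ∧ (G.Adj a x ∨ G.Adj a y)) ∨
     (a ≠ x ∧ b ≠ x ∧ G.Adj a b))
  symm := by
    constructor
    rintro a b ⟨hab, hay, hby, h⟩
    refine ⟨Ne.symm hab, hby, hay, ?_⟩
    rcases h with ⟨ha, h⟩ | ⟨hb, h⟩ | ⟨ha, hb, h⟩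
    · exact Or.inr (Or.inl ⟨ha, h.imp (fun t => t.symm) (fun t => t.symm)⟩)
    · exact Or.inl ⟨hb, h.imp (fun t => t.symm) (fun t => t.symm)⟩
    · exact Or.inr (Or.inr ⟨hb, ha, h.symm⟩)
  loopless := by constructor; rintro a ⟨h, -⟩; exact h rfl

/-- One edge-contraction step: `H` is obtained from `G` by contracting an edge of `G`. -/
def ContractionStep (G H : SimpleGraph V) : Prop :=
  ∃ x y, G.Adj x y ∧ H = contractEdge G x y

/-- A matching of `G` (a set of pairwise disjoint edges). -/
def IsMatching (G : SimpleGraph V) (M : Finset (Sym2 V)) : Prop :=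
  (∀ e ∈ M, e ∈ G.edgeSet) ∧
    ∀ e ∈ M, ∀ f ∈ M, e ≠ f → ∀ x, x ∈ e → x ∉ f

/-- An induced matching of `G`: a matching such that no two vertices belonging to
different edges of it are adjacent. -/
def IsInducedMatching (G : SimpleGraph V) (M : Finset (Sym2 V)) : Prop :=
  IsMatching G M ∧ ∀ e ∈ M, ∀ f ∈ M, e ≠ f → ∀ x ∈ e, ∀ y ∈ f, ¬ G.Adj x y

/-- The induced matching number `im(G)`. -/
noncomputable def inducedMatchingNum (G : SimpleGraph V) : ℕ :=
  sSup {k : ℕ | ∃ M, IsInducedMatching G M ∧ M.card = k}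

/-- A maximal matching. -/
def IsMaximalMatching (G : SimpleGraph V) (M : Finset (Sym2 V)) : Prop :=
  IsMatching G M ∧ ∀ N, IsMatching G N → M ⊆ N → N = M

/-- `min-m(G)`: the minimum size of a maximal matching. -/
noncomputable def minMaximalMatchingNum (G : SimpleGraph V) : ℕ :=
  sInf {k : ℕ | ∃ M, IsMaximalMatching G M ∧ M.card = k}

/-- Independent (stable) sets of a graph. -/
def IsIndepSet (G : SimpleGraph V) (A : Finset V) : Prop :=
  ∀ x ∈ A, ∀ y ∈ A, ¬ G.Adj x y

/-- A vertex cover. -/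
def IsVertexCover (G : SimpleGraph V) (C : Finset V) : Prop :=
  ∀ x y, G.Adj x y → x ∈ C ∨ y ∈ C

/-- `α(G[F])`: the maximum size of an independent set of `G` contained in `F`. -/
noncomputable def indepNumOn (G : SimpleGraph V) (F : Finset V) : ℕ :=
  sSup {k : ℕ | ∃ A ⊆ F, IsIndepSet G A ∧ A.card = k}

/-- The circuit cover number of a graph: `ccn(G) = min{α(G[F]) : F a vertex cover}`. -/
noncomputable def ccnG (G : SimpleGraph V) : ℕ :=
  sInf {k : ℕ | ∃ F, IsVertexCover G F ∧ k = indepNumOn G F}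

open Classical in
/-- The closed neighborhood of a vertex, as a `Finset`. -/
noncomputable def closedNbhd (G : SimpleGraph V) (x : V) : Finset V :=
  Finset.univ.filter fun z => z = x ∨ G.Adj x z

/-- The maximum privacy degree `Γ(G) = max{|N[x] \ N[y]| : xy ∈ E(G)}`. -/
noncomputable def privacyDeg (G : SimpleGraph V) : ℕ :=
  sSup {k : ℕ | ∃ x y, G.Adj x y ∧ k = (closedNbhd G x \ closedNbhd G y).card}

open Classical in
/-- The maximum degree `Δ(G)`. -/
noncomputable def maxDeg (G : SimpleGraph V) : ℕ :=
  sSup {k : ℕ | ∃ v, k = (Finset.univ.filter fun z => G.Adj v z).card}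

end Graphs

open Classical in
/-- `V(M)`: the set of vertices incident to the edges of `M`. -/
noncomputable def matchVerts {V : Type*} [Fintype V] (M : Finset (Sym2 V)) : Finset V :=
  Finset.univ.filter fun x => ∃ e ∈ M, x ∈ e

/-!
Induct on `X`, choosing a non-cone vertex `v` that realizes `θ(X)`. If `v ∉ S`, then `X[S]` is an
induced subcomplex of `del(X;v)`. If `v ∈ S`, deletion and link of `v` commute with restriction
to `S`, so it suffices that `θ(Y) ≤ max{θ(del(Y;v)), θ(lk(Y;v)) + 1}` for *every* vertex `v`
of a complex `Y`, cone vertices included. For a cone vertex `v` this reduces to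
`θ(Y) ≤ θ(del(Y;v))`: `Y` is the cone over `del(Y;v)`, both have the same non-cone vertices, and
deleting or linking any of them leaves `v` a cone vertex, so an optimal elimination order for the
base lifts to `Y`.
-/

section Operations

variable {X : Finset (Finset α)} {A : Finset α} {u v : α}

@[simp]
lemma mem_delF : A ∈ delF X v ↔ A ∈ X ∧ v ∉ A := Finset.mem_filter

@[simp]
lemma mem_lkF : A ∈ lkF X v ↔ A ∈ X ∧ v ∉ A ∧ insert v A ∈ X := Finset.mem_filter

lemma mem_vertF : v ∈ vertF X ↔ ∃ A ∈ X, v ∈ A := by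
  simp [vertF]

lemma lkF_subset_delF (X : Finset (Finset α)) (v : α) : lkF X v ⊆ delF X v := fun A hA ↦ by
  simp only [mem_lkF, mem_delF] at hA ⊢
  exact ⟨hA.1, hA.2.1⟩

lemma delF_eq_self_of_notMem_vertF (hv : v ∉ vertF X) : delF X v = X :=
  Finset.filter_true_of_mem fun A hA hvA ↦ hv (mem_vertF.2 ⟨A, hA, hvA⟩)

lemma delF_comm (X : Finset (Finset α)) (u v : α) : delF (delF X u) v = delF (delF X v) u := by
  ext A
  simp only [mem_delF]
  tauto

lemma lkF_delF (huv : u ≠ v) : lkF (delF X u) v = delF (lkF X v) u := by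
  ext A
  simp only [mem_delF, mem_lkF, Finset.mem_insert, not_or]
  constructor
  · rintro ⟨⟨hA, huA⟩, hvA, hins, -, -⟩
    exact ⟨⟨hA, hvA, hins⟩, huA⟩
  · rintro ⟨⟨hA, hvA, hins⟩, huA⟩
    exact ⟨⟨hA, huA⟩, hvA, hins, huv, huA⟩

lemma IsComplex.delF (hX : IsComplex X) (v : α) : IsComplex (delF X v) := by
  intro A hA B hBA
  rw [mem_delF] at hA ⊢
  exact ⟨hX A hA.1 B hBA, fun hvB ↦ hA.2 (hBA hvB)⟩

lemma IsComplex.lkF (hX : IsComplex X) (v : α) : IsComplex (lkF X v) := by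
  intro A hA B hBA
  rw [mem_lkF] at hA ⊢
  exact ⟨hX A hA.1 B hBA, fun hvB ↦ hA.2.1 (hBA hvB),
    hX _ hA.2.2 _ (Finset.insert_subset_insert v hBA)⟩

lemma IsComplex.filter_subset (hX : IsComplex X) (S : Finset α) :
    IsComplex (X.filter fun A => A ⊆ S) := by
  intro A hA B hBA
  rw [Finset.mem_filter] at hA ⊢
  exact ⟨hX A hA.1 B hBA, hBA.trans hA.2⟩

end Operations

section Theta

variable {X : Finset (Finset α)} {v : α}

lemma theta_eq_zero (h : nonConeF X = ∅) : theta X = 0 := by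
  rw [theta, dif_neg (Finset.not_nonempty_iff_eq_empty.2 h)]

lemma theta_le_of_mem_nonConeF (hv : v ∈ nonConeF X) :
    theta X ≤ max (theta (delF X v)) (theta (lkF X v) + 1) := by
  rw [theta, dif_pos ⟨v, hv⟩]
  exact Finset.inf'_le _ (Finset.mem_attach _ ⟨v, hv⟩)

lemma exists_theta_eq (h : (nonConeF X).Nonempty) :
    ∃ v ∈ nonConeF X, theta X = max (theta (delF X v)) (theta (lkF X v) + 1) := by
  rw [theta, dif_pos h]
  obtain ⟨v, -, hv⟩ := Finset.exists_mem_eq_inf' (Finset.attach_nonempty_iff.2 h)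
    fun v : nonConeF X ↦ max (theta (delF X v)) (theta (lkF X v) + 1)
  exact ⟨v, v.2, hv⟩

end Theta

section Cone

variable {Y : Finset (Finset α)} {A : Finset α} {u v : α}

lemma insert_mem_iff_of_cone (hY : IsComplex Y) (hc : delF Y v = lkF Y v) :
    insert v A ∈ Y ↔ A ∈ Y := by
  refine ⟨fun h ↦ hY _ h A (Finset.subset_insert v A), fun h ↦ ?_⟩
  have hdel : A.erase v ∈ delF Y v :=
    mem_delF.2 ⟨hY A h _ (Finset.erase_subset v A), Finset.notMem_erase v A⟩
  rw [hc, mem_lkF] at hdel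
  exact hY _ hdel.2.2 _ <|
    Finset.insert_subset (Finset.mem_insert_self v _) (Finset.insert_erase_subset v A)

lemma delF_delF_eq_lkF_delF_of_cone (huv : u ≠ v) (hc : delF Y v = lkF Y v) :
    delF (delF Y u) v = lkF (delF Y u) v := by
  rw [lkF_delF huv, ← hc, delF_comm]

lemma delF_lkF_eq_lkF_lkF_of_cone (hY : IsComplex Y) (huv : u ≠ v) (hc : delF Y v = lkF Y v) :
    delF (lkF Y u) v = lkF (lkF Y u) v := by
  refine (lkF_subset_delF _ _).antisymm' fun A hA ↦ ?_
  simp only [mem_delF, mem_lkF] at hA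
  obtain ⟨⟨hA, huA, huA'⟩, hvA⟩ := hA
  simp only [mem_lkF, Finset.mem_insert, not_or]
  have hvuA : insert u (insert v A) ∈ Y := by
    rw [Finset.insert_comm]
    exact (insert_mem_iff_of_cone hY hc).2 huA'
  exact ⟨⟨hA, huA, huA'⟩, hvA, (insert_mem_iff_of_cone hY hc).2 hA, ⟨huv, huA⟩, hvuA⟩

lemma vertF_delF (hY : IsComplex Y) (v : α) : vertF (delF Y v) = (vertF Y).erase v := by
  ext w
  simp only [Finset.mem_erase, mem_vertF, mem_delF]
  constructor
  · rintro ⟨A, ⟨hA, hvA⟩, hwA⟩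
    exact ⟨fun h ↦ hvA (h ▸ hwA), A, hA, hwA⟩
  · rintro ⟨hwv, A, hA, hwA⟩
    exact ⟨A.erase v, ⟨hY A hA _ (A.erase_subset v), A.notMem_erase v⟩,
      Finset.mem_erase.2 ⟨hwv, hwA⟩⟩

lemma delF_delF_eq_lkF_delF_iff_of_cone (hY : IsComplex Y) (hc : delF Y v = lkF Y v)
    (huv : u ≠ v) : delF (delF Y v) u = lkF (delF Y v) u ↔ delF Y u = lkF Y u := by
  refine ⟨fun h ↦ (lkF_subset_delF _ _).antisymm' fun A hA ↦ ?_,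
    fun h ↦ by rw [delF_comm, lkF_delF huv.symm, h]⟩
  rw [mem_delF] at hA
  have hAv : A.erase v ∈ delF (delF Y v) u :=
    mem_delF.2 ⟨mem_delF.2 ⟨hY A hA.1 _ (A.erase_subset v), A.notMem_erase v⟩,
      fun h ↦ hA.2 (Finset.mem_of_mem_erase h)⟩
  rw [h, mem_lkF] at hAv
  have hsub : insert u A ⊆ insert v (insert u (A.erase v)) := by
    intro x
    simp only [Finset.mem_insert, Finset.mem_erase]
    tauto
  have hvuA : insert v (insert u (A.erase v)) ∈ Y :=
    (insert_mem_iff_of_cone hY hc).2 (mem_delF.1 hAv.2.2).1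
  exact mem_lkF.2 ⟨hA.1, hA.2, hY _ hvuA _ hsub⟩

lemma nonConeF_delF_of_cone (hY : IsComplex Y) (hc : delF Y v = lkF Y v) :
    nonConeF (delF Y v) = nonConeF Y := by
  ext u
  simp only [nonConeF, Finset.mem_filter, vertF_delF hY, Finset.mem_erase]
  by_cases huv : u = v
  · simp [huv, hc]
  · simp only [ne_eq, delF_delF_eq_lkF_delF_iff_of_cone hY hc huv]
    tauto

end Cone

lemma theta_le_theta_delF_of_cone {Y : Finset (Finset α)} {v : α} (hY : IsComplex Y)
    (hc : delF Y v = lkF Y v) : theta Y ≤ theta (delF Y v) := by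
  rcases (nonConeF (delF Y v)).eq_empty_or_nonempty with h | h
  · rw [theta_eq_zero (nonConeF_delF_of_cone hY hc ▸ h)]
    exact Nat.zero_le _
  obtain ⟨u, hu, hθ⟩ := exists_theta_eq h
  have huY : u ∈ nonConeF Y := nonConeF_delF_of_cone hY hc ▸ hu
  have huv : u ≠ v := by
    rintro rfl
    exact (Finset.mem_filter.1 huY).2 hc
  calc theta Y ≤ max (theta (delF Y u)) (theta (lkF Y u) + 1) := theta_le_of_mem_nonConeF huY
    _ ≤ max (theta (delF (delF Y u) v)) (theta (delF (lkF Y u) v) + 1) := by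
        gcongr
        · exact theta_le_theta_delF_of_cone (hY.delF u) (delF_delF_eq_lkF_delF_of_cone huv hc)
        · exact theta_le_theta_delF_of_cone (hY.lkF u) (delF_lkF_eq_lkF_lkF_of_cone hY huv hc)
    _ = theta (delF Y v) := by rw [delF_comm, ← lkF_delF huv.symm, hθ]
termination_by Y.card
decreasing_by
  · exact delF_card_lt huY
  · exact lkF_card_lt huY

lemma theta_le_theta_delF_of_notMem_nonConeF {Y : Finset (Finset α)} {v : α} (hY : IsComplex Y)
    (hv : v ∉ nonConeF Y) : theta Y ≤ theta (delF Y v) := by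
  by_cases hvY : v ∈ vertF Y
  · have hc : delF Y v = lkF Y v := not_not.1 fun hc ↦ hv (Finset.mem_filter.2 ⟨hvY, hc⟩)
    exact theta_le_theta_delF_of_cone hY hc
  · rw [delF_eq_self_of_notMem_vertF hvY]

lemma theta_le_max_delF_lkF {Y : Finset (Finset α)} (hY : IsComplex Y) (v : α) :
    theta Y ≤ max (theta (delF Y v)) (theta (lkF Y v) + 1) := by
  by_cases hv : v ∈ nonConeF Y
  · exact theta_le_of_mem_nonConeF hv
  · exact (theta_le_theta_delF_of_notMem_nonConeF hY hv).trans (le_max_left _ _)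

section Restriction

variable {X : Finset (Finset α)} {S : Finset α} {v : α}

lemma delF_filter_subset (X : Finset (Finset α)) (S : Finset α) (v : α) :
    delF (X.filter fun A => A ⊆ S) v = (delF X v).filter fun A => A ⊆ S := by
  ext A
  simp only [mem_delF, Finset.mem_filter]
  tauto

lemma lkF_filter_subset (hv : v ∈ S) :
    lkF (X.filter fun A => A ⊆ S) v = (lkF X v).filter fun A => A ⊆ S := by
  ext A
  simp only [mem_lkF, Finset.mem_filter, Finset.insert_subset_iff, hv, true_and]
  tauto

lemma filter_subset_eq_delF_filter_subset (hv : v ∉ S) :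
    (X.filter fun A => A ⊆ S) = (delF X v).filter fun A => A ⊆ S := by
  ext A
  simp only [mem_delF, Finset.mem_filter]
  exact ⟨fun ⟨hA, hAS⟩ ↦ ⟨⟨hA, fun hvA ↦ hv (hAS hvA)⟩, hAS⟩,
    fun ⟨⟨hA, _⟩, hAS⟩ ↦ ⟨hA, hAS⟩⟩

lemma nonConeF_filter_subset_subset (X : Finset (Finset α)) (S : Finset α) :
    nonConeF (X.filter fun A => A ⊆ S) ⊆ nonConeF X := by
  intro v hv
  simp only [nonConeF, Finset.mem_filter, mem_vertF] at hv ⊢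
  obtain ⟨⟨A, ⟨hA, hAS⟩, hvA⟩, hcone⟩ := hv
  refine ⟨⟨A, hA, hvA⟩, fun hc ↦ hcone ?_⟩
  rw [delF_filter_subset, lkF_filter_subset (hAS hvA), hc]

end Restriction

variable {X : Finset (Finset α)}

theorem theta_induced_subcomplex_le_general (hX : IsComplex X) {S : Finset α} :
    theta (X.filter fun A => A ⊆ S) ≤ theta X := by
  induction hn : X.card using Nat.strong_induction_on generalizing X with | _ n ih
  rcases (nonConeF X).eq_empty_or_nonempty with h | h
  · rw [theta_eq_zero (Finset.subset_empty.1 (h ▸ nonConeF_filter_subset_subset X S))]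
    exact Nat.zero_le _
  obtain ⟨v, hv, hθ⟩ := exists_theta_eq h
  have hdel := ih _ (hn ▸ delF_card_lt hv) (hX.delF v) rfl
  by_cases hvS : v ∈ S
  · have hlk := ih _ (hn ▸ lkF_card_lt hv) (hX.lkF v) rfl
    calc theta (X.filter fun A => A ⊆ S)
        ≤ max (theta (delF (X.filter fun A => A ⊆ S) v))
            (theta (lkF (X.filter fun A => A ⊆ S) v) + 1) :=
          theta_le_max_delF_lkF (hX.filter_subset S) v
      _ ≤ max (theta (delF X v)) (theta (lkF X v) + 1) := by
          rw [delF_filter_subset, lkF_filter_subset hvS]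
          gcongr
      _ = theta X := hθ.symm
  · calc theta (X.filter fun A => A ⊆ S)
        = theta ((delF X v).filter fun A => A ⊆ S) := by
          rw [filter_subset_eq_delF_filter_subset hvS]
      _ ≤ theta (delF X v) := hdel
      _ ≤ theta X := hθ ▸ le_max_left _ _

theorem theta_induced_subcomplex_le {V : Finset α} (hX : IsComplex X) (hXV : ∀ A ∈ X, A ⊆ V)
    {S : Finset α} (hS : S ⊆ V) :
    theta (X.filter fun A => A ⊆ S) ≤ theta X :=
  theta_induced_subcomplex_le_general hX

end ThetaPaper
end

section
/- For every finite simple graph G, the inequalities im(G) ≤ θ(G) ≤ ccn(G) ≤ min-m(G) hold, where im(G) is the induced matching number, ccn(G) = min{α(G[F]) : F a vertex cover of G} is the circuit cover number, and min-m(G) is the minimum size of a maximal matching of G. -/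
namespace ThetaPaper

variable {α : Type*} [DecidableEq α]

variable {X : Finset (Finset α)}

/-! Write `Ind(G[W])` for the independence complex of the subgraph induced on `W`. Deleting a
vertex `v` from it gives `Ind(G[W - v])` and its link at `v ∈ W` is `Ind(G[W - N[v]])`; the
non-cone vertices are exactly the non-isolated ones. So `θ` can be bounded by induction on `W`.

If `M` is an induced matching inside `W`, a non-cone vertex `v` either misses `M`, and `M`
survives in the deletion, or lies on an edge of `M`, and the other edges survive in the link:
hence `|M| ≤ θ`. If `F` covers the edges inside `W` and independent subsets of `F` have at most
`n` elements, branch at an endpoint `v ∈ F` of an edge: the deletion keeps the bound `n`, and in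
the link it drops to `n - 1` because independent sets there extend by `v`. Finally, the vertices
of a maximal matching form a vertex cover, and an independent set meets each matching edge at
most once. -/

lemma theta_eq_zero_of_not_nonempty (h : ¬(nonConeF X).Nonempty) : theta X = 0 := by
  rw [theta, dif_neg h]

lemma theta_le_max_of_mem_nonConeF {v : α} (hv : v ∈ nonConeF X) :
    theta X ≤ max (theta (delF X v)) (theta (lkF X v) + 1) := by
  rw [theta, dif_pos ⟨v, hv⟩]
  exact Finset.inf'_le _ (Finset.mem_attach _ ⟨v, hv⟩)

lemma le_theta_of_forall_mem_nonConeF {k : ℕ} (hne : (nonConeF X).Nonempty)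
    (h : ∀ v ∈ nonConeF X, k ≤ max (theta (delF X v)) (theta (lkF X v) + 1)) :
    k ≤ theta X := by
  rw [theta, dif_pos hne]
  exact Finset.le_inf' _ _ fun v _ => h v.1 v.2

section Graphs

variable {V : Type*} {G : SimpleGraph V}

lemma isIndepSet_singleton (G : SimpleGraph V) (v : V) : IsIndepSet G {v} := by
  simp [IsIndepSet]

lemma IsIndepSet.insert [DecidableEq V] {A : Finset V} {v : V} (hA : IsIndepSet G A)
    (hv : ∀ a ∈ A, ¬G.Adj v a) : IsIndepSet G (insert v A) := by
  intro x hx y hy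
  rcases Finset.mem_insert.mp hx with rfl | hxA <;> rcases Finset.mem_insert.mp hy with rfl | hyA
  · exact G.loopless.irrefl _
  · exact hv y hyA
  · exact fun h => hv x hxA h.symm
  · exact hA x hxA y hyA

lemma mem_closedNbhd [Fintype V] [DecidableEq V] {v z : V} :
    z ∈ closedNbhd G v ↔ z = v ∨ G.Adj v z := by
  simp [closedNbhd]

lemma mem_sdiff_closedNbhd [Fintype V] [DecidableEq V] {W : Finset V} {v z : V} :
    z ∈ W \ closedNbhd G v ↔ z ∈ W ∧ z ≠ v ∧ ¬G.Adj v z := by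
  rw [Finset.mem_sdiff, mem_closedNbhd, not_or]

lemma mem_matchVerts [Fintype V] {M : Finset (Sym2 V)} {x : V} :
    x ∈ matchVerts M ↔ ∃ e ∈ M, x ∈ e := by
  simp [matchVerts]

lemma sdiff_closedNbhd_ssubset [Fintype V] [DecidableEq V] {W : Finset V} {v : V} (hv : v ∈ W) :
    W \ closedNbhd G v ⊂ W :=
  (Finset.ssubset_iff_of_subset Finset.sdiff_subset).mpr
    ⟨v, hv, fun h => (Finset.mem_sdiff.mp h).2 (mem_closedNbhd.mpr (Or.inl rfl))⟩

open Classical in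
/-- The independence complex of the induced subgraph `G[W]`. -/
noncomputable def indComplexOn (G : SimpleGraph V) (W : Finset V) : Finset (Finset V) :=
  W.powerset.filter (IsIndepSet G)

lemma mem_indComplexOn {W A : Finset V} :
    A ∈ indComplexOn G W ↔ A ⊆ W ∧ IsIndepSet G A := by
  simp [indComplexOn]

lemma indComplex_eq_indComplexOn_univ [Fintype V] [DecidableEq V] (G : SimpleGraph V) :
    indComplex G = indComplexOn G Finset.univ := by
  ext A
  simp [indComplex, indComplexOn, IsIndepSet]

lemma singleton_mem_indComplexOn {W : Finset V} {v : V} :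
    {v} ∈ indComplexOn G W ↔ v ∈ W := by
  simp [mem_indComplexOn, isIndepSet_singleton]

lemma indComplexOn_inj {W₁ W₂ : Finset V} :
    indComplexOn G W₁ = indComplexOn G W₂ ↔ W₁ = W₂ := by
  refine ⟨fun h => Finset.ext fun v => ?_, fun h => h ▸ rfl⟩
  rw [← singleton_mem_indComplexOn, h, singleton_mem_indComplexOn]

lemma vertF_indComplexOn [DecidableEq V] (G : SimpleGraph V) (W : Finset V) :
    vertF (indComplexOn G W) = W := by
  ext v
  simp only [vertF, Finset.mem_biUnion, id]
  exact ⟨fun ⟨A, hA, hv⟩ => (mem_indComplexOn.mp hA).1 hv,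
    fun hv => ⟨{v}, singleton_mem_indComplexOn.mpr hv, Finset.mem_singleton_self v⟩⟩

lemma delF_indComplexOn [DecidableEq V] (G : SimpleGraph V) (W : Finset V) (v : V) :
    delF (indComplexOn G W) v = indComplexOn G (W.erase v) := by
  ext A
  rw [delF, Finset.mem_filter, mem_indComplexOn, mem_indComplexOn, Finset.subset_erase]
  tauto

lemma lkF_indComplexOn [Fintype V] [DecidableEq V] (G : SimpleGraph V) {W : Finset V} {v : V}
    (hv : v ∈ W) :
    lkF (indComplexOn G W) v = indComplexOn G (W \ closedNbhd G v) := by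
  ext A
  simp only [lkF, Finset.mem_filter, mem_indComplexOn, Finset.subset_sdiff,
    Finset.disjoint_left, mem_closedNbhd, Finset.insert_subset_iff, not_or]
  constructor
  · rintro ⟨⟨hAW, hA⟩, hvA, -, hvA'⟩
    refine ⟨⟨hAW, fun a ha => ⟨fun h => hvA (h ▸ ha), ?_⟩⟩, hA⟩
    exact hvA' v (Finset.mem_insert_self v A) a (Finset.mem_insert_of_mem ha)
  · rintro ⟨⟨hAW, hvA⟩, hA⟩
    exact ⟨⟨hAW, hA⟩, fun h => (hvA h).1 rfl, ⟨hv, hAW⟩,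
      hA.insert fun a ha => (hvA ha).2⟩

lemma mem_nonConeF_indComplexOn [Fintype V] [DecidableEq V] {W : Finset V} {v : V} :
    v ∈ nonConeF (indComplexOn G W) ↔ v ∈ W ∧ ∃ w ∈ W, G.Adj v w := by
  rw [nonConeF, Finset.mem_filter, vertF_indComplexOn]
  refine and_congr_right fun hv => ?_
  rw [delF_indComplexOn, lkF_indComplexOn G hv, Ne, indComplexOn_inj]
  constructor
  · intro hne
    by_contra! hnbr
    refine hne (Finset.ext fun w => ?_)
    simp only [Finset.mem_erase, Finset.mem_sdiff, mem_closedNbhd, not_or]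
    exact ⟨fun ⟨hwv, hw⟩ => ⟨hw, hwv, hnbr w hw⟩, fun ⟨hw, hwv, _⟩ => ⟨hwv, hw⟩⟩
  · rintro ⟨w, hw, hvw⟩ heq
    have hw' : w ∈ W.erase v := Finset.mem_erase.mpr ⟨hvw.ne', hw⟩
    rw [heq, Finset.mem_sdiff, mem_closedNbhd] at hw'
    exact hw'.2 (Or.inr hvw)

lemma IsInducedMatching.mono {M N : Finset (Sym2 V)} (hM : IsInducedMatching G M) (h : N ⊆ M) :
    IsInducedMatching G N :=
  ⟨⟨fun e he => hM.1.1 e (h he), fun e he f hf => hM.1.2 e (h he) f (h hf)⟩,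
    fun e he f hf => hM.2 e (h he) f (h hf)⟩

lemma IsInducedMatching.matchVerts_erase_subset [Fintype V] [DecidableEq V]
    {M : Finset (Sym2 V)} (hM : IsInducedMatching G M) {e : Sym2 V} (he : e ∈ M) {v : V}
    (hv : v ∈ e) : matchVerts (M.erase e) ⊆ matchVerts M \ closedNbhd G v := by
  intro x hx
  obtain ⟨f, hf, hxf⟩ := mem_matchVerts.mp hx
  obtain ⟨hfe, hfM⟩ := Finset.mem_erase.mp hf
  rw [Finset.mem_sdiff, mem_matchVerts, mem_closedNbhd]
  refine ⟨⟨f, hfM, hxf⟩, ?_⟩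
  rintro (rfl | hvx)
  · exact hM.1.2 e he f hfM hfe.symm x hv hxf
  · exact hM.2 e he f hfM hfe.symm v hv x hxf hvx

lemma IsInducedMatching.card_le_theta_indComplexOn [Fintype V] [DecidableEq V]
    {M : Finset (Sym2 V)} (hM : IsInducedMatching G M) {W : Finset V} (hMW : matchVerts M ⊆ W) :
    M.card ≤ theta (indComplexOn G W) := by
  induction W using Finset.strongInduction generalizing M with
  | H W ih =>
  obtain rfl | ⟨e, he⟩ := M.eq_empty_or_nonempty
  · simp
  have hnonCone : (nonConeF (indComplexOn G W)).Nonempty := by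
    induction e using Sym2.ind with
    | h x y =>
    have hmem : ∀ z ∈ s(x, y), z ∈ W := fun z hz => hMW (mem_matchVerts.mpr ⟨_, he, hz⟩)
    exact ⟨x, mem_nonConeF_indComplexOn.mpr ⟨hmem x (Sym2.mem_mk_left x y), y,
      hmem y (Sym2.mem_mk_right x y), hM.1.1 _ he⟩⟩
  refine le_theta_of_forall_mem_nonConeF hnonCone fun v hv => ?_
  have hvW := (mem_nonConeF_indComplexOn.mp hv).1
  by_cases hvM : v ∈ matchVerts M
  · obtain ⟨f, hf, hvf⟩ := mem_matchVerts.mp hvM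
    rw [lkF_indComplexOn G hvW]
    have hlk := ih (W \ closedNbhd G v) (sdiff_closedNbhd_ssubset hvW)
      (hM.mono (Finset.erase_subset f M))
      ((hM.matchVerts_erase_subset hf hvf).trans (Finset.sdiff_subset_sdiff hMW le_rfl))
    have := Finset.card_erase_add_one hf
    omega
  · rw [delF_indComplexOn]
    exact le_max_of_le_left
      (ih _ (Finset.erase_ssubset hvW) hM (Finset.subset_erase.mpr ⟨hMW, hvM⟩))

lemma theta_indComplexOn_le [Fintype V] [DecidableEq V] {W F : Finset V} {n : ℕ}
    (hcov : ∀ x ∈ W, ∀ y ∈ W, G.Adj x y → x ∈ F ∨ y ∈ F)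
    (hF : ∀ A ⊆ F, IsIndepSet G A → A.card ≤ n) : theta (indComplexOn G W) ≤ n := by
  induction W using Finset.strongInduction generalizing F n with
  | H W ih =>
  by_cases hne : (nonConeF (indComplexOn G W)).Nonempty
  swap
  · rw [theta_eq_zero_of_not_nonempty hne]
    exact Nat.zero_le n
  obtain ⟨v, hvF, hv⟩ : ∃ v ∈ F, v ∈ nonConeF (indComplexOn G W) := by
    obtain ⟨u, hu⟩ := hne
    obtain ⟨huW, w, hwW, huw⟩ := mem_nonConeF_indComplexOn.mp hu
    rcases hcov u huW w hwW huw with h | h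
    · exact ⟨u, h, hu⟩
    · exact ⟨w, h, mem_nonConeF_indComplexOn.mpr ⟨hwW, u, huW, huw.symm⟩⟩
  have hvW := (mem_nonConeF_indComplexOn.mp hv).1
  refine (theta_le_max_of_mem_nonConeF hv).trans (max_le ?_ ?_)
  · rw [delF_indComplexOn]
    exact ih _ (Finset.erase_ssubset hvW)
      (fun x hx y hy => hcov x (Finset.mem_of_mem_erase hx) y (Finset.mem_of_mem_erase hy)) hF
  · rw [lkF_indComplexOn G hvW]
    have hn : 1 ≤ n := by
      simpa using hF {v} (Finset.singleton_subset_iff.mpr hvF) (isIndepSet_singleton G v)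
    have hcov' : ∀ x ∈ W \ closedNbhd G v, ∀ y ∈ W \ closedNbhd G v, G.Adj x y →
        x ∈ F \ closedNbhd G v ∨ y ∈ F \ closedNbhd G v := by
      intro x hx y hy hxy
      simp only [mem_sdiff_closedNbhd] at hx hy ⊢
      rcases hcov x hx.1 y hy.1 hxy with h | h
      · exact Or.inl ⟨h, hx.2⟩
      · exact Or.inr ⟨h, hy.2⟩
    have hF' : ∀ A ⊆ F \ closedNbhd G v, IsIndepSet G A → A.card ≤ n - 1 := by
      intro A hA hind
      have hAv : ∀ a ∈ A, a ≠ v ∧ ¬G.Adj v a := fun a ha =>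
        (mem_sdiff_closedNbhd.mp (hA ha)).2
      have hins := hF (insert v A) (Finset.insert_subset hvF (hA.trans Finset.sdiff_subset))
        (hind.insert fun a ha => (hAv a ha).2)
      rw [Finset.card_insert_of_notMem fun h => (hAv v h).1 rfl] at hins
      omega
    have := ih _ (sdiff_closedNbhd_ssubset hvW) hcov' hF'
    omega

lemma card_le_indepNumOn {F A : Finset V} (hA : A ⊆ F) (hind : IsIndepSet G A) :
    A.card ≤ indepNumOn G F :=
  le_csSup ⟨F.card, by rintro _ ⟨B, hB, -, rfl⟩; exact Finset.card_le_card hB⟩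
    ⟨A, hA, hind, rfl⟩

lemma IsMaximalMatching.isVertexCover_matchVerts [Fintype V] {M : Finset (Sym2 V)}
    (hM : IsMaximalMatching G M) : IsVertexCover G (matchVerts M) := by
  classical
  intro x y hxy
  by_contra! hxyM
  simp only [mem_matchVerts, not_exists, not_and] at hxyM
  have hnew : s(x, y) ∉ M := fun h => hxyM.1 _ h (Sym2.mem_mk_left x y)
  have hext : IsMatching G (insert s(x, y) M) := by
    refine ⟨fun e he => ?_, fun e he f hf hef z hze hzf => ?_⟩
    · rcases Finset.mem_insert.mp he with rfl | he
      · exact hxy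
      · exact hM.1.1 e he
    have hfresh : ∀ g ∈ M, z ∈ g → z ∉ s(x, y) := fun g hg hzg hz => by
      rcases Sym2.mem_iff.mp hz with rfl | rfl
      · exact hxyM.1 g hg hzg
      · exact hxyM.2 g hg hzg
    rcases Finset.mem_insert.mp he with rfl | he <;> rcases Finset.mem_insert.mp hf with rfl | hf
    · exact hef rfl
    · exact hfresh f hf hzf hze
    · exact hfresh e he hze hzf
    · exact hM.1.2 e he f hf hef z hze hzf
  exact hnew (hM.2 _ hext (Finset.subset_insert _ _) ▸ Finset.mem_insert_self _ _)

lemma indepNumOn_matchVerts_le [Fintype V] {M : Finset (Sym2 V)}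
    (hM : ∀ e ∈ M, e ∈ G.edgeSet) :
    indepNumOn G (matchVerts M) ≤ M.card := by
  refine csSup_le' ?_
  rintro _ ⟨A, hA, hind, rfl⟩
  refine Finset.card_le_card_of_forall_subsingleton (· ∈ ·)
    (fun x hx => mem_matchVerts.mp (hA hx)) fun e he x hx y hy => ?_
  by_contra hxy
  have hexy : e = s(x, y) := (Sym2.mem_and_mem_iff hxy).mp ⟨hx.2, hy.2⟩
  exact hind x hx.1 y hy.1 (G.mem_edgeSet.mp (hexy ▸ hM e he))

lemma exists_isMaximalMatching [Fintype V] (G : SimpleGraph V) : ∃ M, IsMaximalMatching G M := by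
  classical
  obtain ⟨M, hM, hmax⟩ := Finset.exists_max_image
    (Finset.univ.filter fun M : Finset (Sym2 V) => IsMatching G M) Finset.card
    ⟨∅, Finset.mem_filter.mpr ⟨Finset.mem_univ _, by simp [IsMatching]⟩⟩
  refine ⟨M, (Finset.mem_filter.mp hM).2, fun N hN hMN => ?_⟩
  exact (Finset.eq_of_subset_of_card_le hMN (hmax N (by simpa using hN))).symm

lemma inducedMatchingNum_le_thetaG [Fintype V] [DecidableEq V] (G : SimpleGraph V) :
    inducedMatchingNum G ≤ thetaG G := by
  refine csSup_le' ?_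
  rintro _ ⟨M, hM, rfl⟩
  rw [thetaG, indComplex_eq_indComplexOn_univ]
  exact hM.card_le_theta_indComplexOn (Finset.subset_univ _)

lemma thetaG_le_ccnG [Fintype V] [DecidableEq V] (G : SimpleGraph V) : thetaG G ≤ ccnG G := by
  refine le_csInf ⟨_, Finset.univ, fun x _ _ => Or.inl (Finset.mem_univ x), rfl⟩ ?_
  rintro _ ⟨F, hF, rfl⟩
  rw [thetaG, indComplex_eq_indComplexOn_univ]
  exact theta_indComplexOn_le (fun x _ y _ hxy => hF x y hxy) fun A hA => card_le_indepNumOn hA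

lemma ccnG_le_minMaximalMatchingNum [Fintype V] (G : SimpleGraph V) :
    ccnG G ≤ minMaximalMatchingNum G := by
  obtain ⟨M₀, hM₀⟩ := exists_isMaximalMatching G
  refine le_csInf ⟨_, M₀, hM₀, rfl⟩ ?_
  rintro _ ⟨M, hM, rfl⟩
  calc ccnG G ≤ indepNumOn G (matchVerts M) :=
        Nat.sInf_le ⟨_, hM.isVertexCover_matchVerts, rfl⟩
    _ ≤ M.card := indepNumOn_matchVerts_le hM.1.1

end Graphs

theorem im_le_theta_and_theta_le_ccn_and_ccn_le_minMaximalMatching {V : Type*} [Fintype V] [DecidableEq V] (G : SimpleGraph V) :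
    inducedMatchingNum G ≤ thetaG G ∧ thetaG G ≤ ccnG G ∧
      ccnG G ≤ minMaximalMatchingNum G :=
  ⟨inducedMatchingNum_le_thetaG G, thetaG_le_ccnG G, ccnG_le_minMaximalMatchingNum G⟩

end ThetaPaper
end
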